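/- There exists a universal constant c > 0 such that the following holds: for any k matroids M_1 = (V, I_1), …, M_k = (V, I_k) over a common finite ground set V, any partition (S_1, …, S_k) of S ⊆ V with S_i ∈ I_i for all i ∈ [k], and any positive integer d, if the length of every (s, T)-path in the compressed exchange graph G(S_1, …, S_k) is at least d, then |S| ≥ (1 − c/d)·p, where p is the maximum size of a partitionable set. -/

import Mathlib

/-- A matroid on a finite ground set `V`, given by its family of independent sets. -/
structure FinMatroid (V : Type*) [DecidableEq V] [Fintype V] where
  Indep : Finset V → Prop
  indep_empty : Indep ∅
  indep_subset : ∀ ⦃S T : Finset V⦄, Indep S → T ⊆ S → Indep T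
  indep_aug : ∀ ⦃S T : Finset V⦄, Indep S → Indep T → T.card < S.card →
    ∃ x ∈ S \ T, Indep (insert x T)

/-- `S` is partitionable w.r.t. the matroids `M i`: it can be partitioned into
sets `P i` with `P i` independent in `M i`. -/
def Partitionable {V ι : Type*} [DecidableEq V] [Fintype V] [DecidableEq ι] [Fintype ι]
    (M : ι → FinMatroid V) (S : Finset V) : Prop :=
  ∃ P : ι → Finset V, (∀ i, (M i).Indep (P i)) ∧
    (∀ i j, i ≠ j → Disjoint (P i) (P j)) ∧ Finset.univ.biUnion P = S

/-- `reachIn Adj n x y` : there is a directed walk with exactly `n` edges from `x` to `y`. -/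
def reachIn {α : Type*} (Adj : α → α → Prop) : ℕ → α → α → Prop
  | 0, x, y => x = y
  | n + 1, x, y => ∃ z, Adj x z ∧ reachIn Adj n z y

/-- Distance (number of edges of a shortest directed path) from `x` to `y`; `⊤` if none. -/
noncomputable def ddist {α : Type*} (Adj : α → α → Prop) (x y : α) : ℕ∞ :=
  sInf {n : ℕ∞ | ∃ m : ℕ, n = (m : ℕ∞) ∧ reachIn Adj m x y}

/-- Vertices of the compressed exchange graph: ground elements, a source `src`,
and one sink `snk i` for each index `i`. -/
inductive CVert (V ι : Type*) where
  | elt : V → CVert V ι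
  | src : CVert V ι
  | snk : ι → CVert V ι

/-- The compressed exchange graph `G(S₁, …, S_k)` relative to the partition `P`. -/
def compAdj {V ι : Type*} [DecidableEq V] [Fintype V] [DecidableEq ι] [Fintype ι]
    (M : ι → FinMatroid V) (P : ι → Finset V) : CVert V ι → CVert V ι → Prop
  | CVert.elt v, CVert.elt u =>
      ∃ i, u ∈ P i ∧ ¬ (M i).Indep (insert v (P i)) ∧
        (M i).Indep (insert v ((P i).erase u))
  | CVert.src, CVert.elt v => v ∉ Finset.univ.biUnion P
  | CVert.elt v, CVert.snk i => v ∉ P i ∧ (M i).Indep (insert v (P i))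
  | _, _ => False

/-!
Let `B m` (`srcBall`) be the set of ground elements at distance at most `m` from `s`. Since no
sink lies within distance `d - 1`, for `m + 1 < d` every `v ∈ B m \ Sᵢ` is spanned in `Mᵢ` by
the elements of its fundamental circuit in `Sᵢ`, all of which lie in `B (m + 1)`. Hence any
independent set of `Mᵢ` meets `B m` in at most `|Sᵢ ∩ B (m + 1)|` elements, and as
`V \ S ⊆ B 1`, every partitionable set has size at most `|S| + |S ∩ B (m + 1)| - |S ∩ B m|`
for `1 ≤ m ≤ d - 2`. Among these `d - 2` layers one has at most `|S| / (d - 2)` elements, which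
gives `(d - 2) p ≤ (d - 1) |S|`.
-/

open Finset

namespace FinMatroid

variable {V : Type*} [DecidableEq V] [Fintype V] (M : FinMatroid V)

lemma card_le_card_of_not_indep_insert {A B : Finset V} (hA : M.Indep A) (hB : M.Indep B)
    (h : ∀ v ∈ B \ A, ¬ M.Indep (insert v A)) : B.card ≤ A.card := by
  by_contra! hlt
  obtain ⟨x, hx, hxA⟩ := M.indep_aug hB hA hlt
  exact h x hx hxA

lemma exists_indep_superset_card_eq {I A : Finset V} (hI : M.Indep I) (hA : M.Indep A)
    (hIA : I.card ≤ A.card) : ∃ J, M.Indep J ∧ I ⊆ J ∧ J ⊆ I ∪ A ∧ J.card = A.card := by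
  obtain ⟨n, hn⟩ : ∃ n, A.card - I.card = n := ⟨_, rfl⟩
  induction n generalizing I with
  | zero => exact ⟨I, hI, subset_rfl, subset_union_left, by omega⟩
  | succ n ih =>
    obtain ⟨x, hx, hxI⟩ := M.indep_aug hA hI (by omega)
    rw [mem_sdiff] at hx
    have hcard : (insert x I).card = I.card + 1 := card_insert_of_notMem hx.2
    obtain ⟨J, hJ, hxIJ, hJsub, hJcard⟩ := ih hxI (by omega) (by omega)
    refine ⟨J, hJ, (subset_insert x I).trans hxIJ, hJsub.trans ?_, hJcard⟩
    rw [insert_union]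
    exact insert_subset (mem_union_right _ hx.1) subset_rfl

open Classical in
/-- `insert v (A.filter …)` is the fundamental circuit of `v` in `A`. -/
lemma not_indep_insert_filter {A : Finset V} {v : V} (hA : M.Indep A) (hv : v ∉ A)
    (hdep : ¬ M.Indep (insert v A)) :
    ¬ M.Indep (insert v (A.filter fun u => M.Indep (insert v (A.erase u)))) := by
  set C := A.filter fun u => M.Indep (insert v (A.erase u))
  intro hC
  have hCA : C ⊆ A := filter_subset _ _
  have hCcard : (insert v C).card ≤ A.card := by
    by_contra! hlt
    have hCeq : C = A := eq_of_subset_of_card_le hCA (by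
      rw [card_insert_of_notMem fun h => hv (hCA h)] at hlt; omega)
    exact hdep (hCeq ▸ hC)
  -- Extending `v + C` inside `v + A` to the size of `A` drops a single `u ∈ A`, and then `u ∈ C`.
  obtain ⟨J, hJ, hCJ, hJsub, hJcard⟩ := M.exists_indep_superset_card_eq hC hA hCcard
  have hJvA : J ⊆ insert v A := by
    rw [insert_union] at hJsub
    exact hJsub.trans (insert_subset_insert v (union_subset hCA subset_rfl))
  obtain ⟨u, huvA, huJ⟩ : ∃ u ∈ insert v A, u ∉ J :=
    not_subset.mp fun h => by
      have := card_le_card h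
      rw [card_insert_of_notMem hv] at this; omega
  have huA : u ∈ A :=
    (mem_insert.mp huvA).resolve_left fun h => huJ (h ▸ hCJ (mem_insert_self v C))
  have hJeq : J = insert v (A.erase u) := by
    refine eq_of_subset_of_card_le (fun x hx => ?_) ?_
    · rcases mem_insert.mp (hJvA hx) with rfl | hxA
      · exact mem_insert_self _ _
      · exact mem_insert_of_mem (mem_erase.mpr ⟨fun h => huJ (h ▸ hx), hxA⟩)
    · rw [card_insert_of_notMem fun h => hv (mem_of_mem_erase h), card_erase_of_mem huA]
      have := card_pos.mpr ⟨u, huA⟩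
      omega
  exact huJ (hCJ (mem_insert_of_mem (mem_filter.mpr ⟨huA, hJeq ▸ hJ⟩)))

end FinMatroid

lemma reachIn_snoc {α : Type*} {Adj : α → α → Prop} {n : ℕ} {x y z : α}
    (hxy : reachIn Adj n x y) (hyz : Adj y z) : reachIn Adj (n + 1) x z := by
  induction n generalizing x with
  | zero => exact ⟨z, (hxy : x = y) ▸ hyz, rfl⟩
  | succ n ih =>
    obtain ⟨w, hxw, hwy⟩ := hxy
    exact ⟨w, hxw, ih hwy⟩

lemma ddist_le_of_reachIn {α : Type*} {Adj : α → α → Prop} {n : ℕ} {x y : α}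
    (h : reachIn Adj n x y) : ddist Adj x y ≤ n :=
  sInf_le ⟨n, rfl, h⟩

lemma card_biUnion_inter_eq_sum {V ι : Type*} [DecidableEq V] [Fintype ι] {P : ι → Finset V}
    (hP : ∀ i j, i ≠ j → Disjoint (P i) (P j)) (B : Finset V) :
    (univ.biUnion P ∩ B).card = ∑ i, (P i ∩ B).card := by
  rw [biUnion_inter, card_biUnion]
  exact fun i _ j _ hij => (hP i j hij).mono inter_subset_left inter_subset_left

lemma exists_lt_mul_tsub_le_of_monotone {g : ℕ → ℕ} (hg : Monotone g) {k : ℕ} (hk : 0 < k) :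
    ∃ ℓ < k, k * (g (ℓ + 1) - g ℓ) ≤ g k := by
  obtain ⟨ℓ, hℓ, hmin⟩ := (range k).exists_min_image (fun i => g (i + 1) - g i)
    ⟨0, mem_range.mpr hk⟩
  refine ⟨ℓ, mem_range.mp hℓ, ?_⟩
  calc k * (g (ℓ + 1) - g ℓ) = (range k).card • (g (ℓ + 1) - g ℓ) := by simp
    _ ≤ ∑ i ∈ range k, (g (i + 1) - g i) := card_nsmul_le_sum _ _ _ hmin
    _ = g k - g 0 := sum_range_tsub hg k
    _ ≤ g k := Nat.sub_le _ _

section ExchangeGraph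

variable {V ι : Type*} [DecidableEq V] [Fintype V] [DecidableEq ι] [Fintype ι]

open Classical in
noncomputable def srcBall (M : ι → FinMatroid V) (P : ι → Finset V) (m : ℕ) : Finset V :=
  univ.filter fun v => ∃ j ≤ m, reachIn (compAdj M P) j .src (.elt v)

variable {M : ι → FinMatroid V} {P : ι → Finset V} {d m : ℕ}

lemma mem_srcBall {v : V} :
    v ∈ srcBall M P m ↔ ∃ j ≤ m, reachIn (compAdj M P) j .src (.elt v) := by
  simp [srcBall]

lemma srcBall_mono : Monotone (srcBall M P) := fun _ _ hmn _ hv =>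
  let ⟨j, hj, hr⟩ := mem_srcBall.mp hv
  mem_srcBall.mpr ⟨j, hj.trans hmn, hr⟩

lemma mem_srcBall_one_of_notMem {v : V} (hv : v ∉ univ.biUnion P) : v ∈ srcBall M P 1 :=
  mem_srcBall.mpr ⟨1, le_rfl, .elt v, hv, rfl⟩

lemma mem_srcBall_succ_of_compAdj {v u : V} (hv : v ∈ srcBall M P m)
    (hvu : compAdj M P (.elt v) (.elt u)) : u ∈ srcBall M P (m + 1) :=
  let ⟨j, hj, hr⟩ := mem_srcBall.mp hv
  mem_srcBall.mpr ⟨j + 1, by omega, reachIn_snoc hr hvu⟩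

variable (hdist : ∀ i, (d : ℕ∞) ≤ ddist (compAdj M P) .src (.snk i))
include hdist

lemma not_indep_insert_of_mem_srcBall (hmd : m + 1 < d) {v : V} (hv : v ∈ srcBall M P m)
    {i : ι} (hvi : v ∉ P i) : ¬ (M i).Indep (insert v (P i)) := fun hind => by
  obtain ⟨j, hj, hr⟩ := mem_srcBall.mp hv
  have := (hdist i).trans (ddist_le_of_reachIn (reachIn_snoc hr (show compAdj M P _ _ from
    ⟨hvi, hind⟩)))
  norm_cast at this
  omega

lemma not_indep_insert_inter_srcBall {i : ι} (hPi : (M i).Indep (P i)) (hmd : m + 1 < d) {v : V}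
    (hv : v ∈ srcBall M P m) (hvi : v ∉ P i) :
    ¬ (M i).Indep (insert v (P i ∩ srcBall M P (m + 1))) := by
  classical
  have hdep := not_indep_insert_of_mem_srcBall hdist hmd hv hvi
  refine fun hind => (M i).not_indep_insert_filter hPi hvi hdep
    ((M i).indep_subset hind (insert_subset_insert v fun u hu => ?_))
  obtain ⟨huP, hexch⟩ := mem_filter.mp hu
  exact mem_inter.mpr ⟨huP, mem_srcBall_succ_of_compAdj hv ⟨i, huP, hdep, hexch⟩⟩

lemma card_inter_srcBall_le {i : ι} (hPi : (M i).Indep (P i)) (hmd : m + 1 < d) {Q : Finset V}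
    (hQ : (M i).Indep Q) : (Q ∩ srcBall M P m).card ≤ (P i ∩ srcBall M P (m + 1)).card := by
  refine (M i).card_le_card_of_not_indep_insert ((M i).indep_subset hPi inter_subset_left)
    ((M i).indep_subset hQ inter_subset_left) fun v hv => ?_
  rw [mem_sdiff, mem_inter] at hv
  obtain ⟨⟨-, hvB⟩, hvPB⟩ := hv
  exact not_indep_insert_inter_srcBall hdist hPi hmd hvB
    fun hvP => hvPB (mem_inter.mpr ⟨hvP, srcBall_mono (Nat.le_succ m) hvB⟩)

lemma card_add_card_inter_srcBall_le (hP : ∀ i, (M i).Indep (P i))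
    (hPdisj : ∀ i j, i ≠ j → Disjoint (P i) (P j)) (hm : 1 ≤ m) (hmd : m + 1 < d) {T : Finset V}
    (hT : Partitionable M T) :
    T.card + (univ.biUnion P ∩ srcBall M P m).card ≤
      (univ.biUnion P).card + (univ.biUnion P ∩ srcBall M P (m + 1)).card := by
  obtain ⟨Q, hQ, hQdisj, rfl⟩ := hT
  have hinter : (univ.biUnion Q ∩ srcBall M P m).card ≤
      (univ.biUnion P ∩ srcBall M P (m + 1)).card := by
    rw [card_biUnion_inter_eq_sum hQdisj, card_biUnion_inter_eq_sum hPdisj]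
    exact sum_le_sum fun i _ => card_inter_srcBall_le hdist (hP i) hmd (hQ i)
  have hsdiff : univ.biUnion Q \ srcBall M P m ⊆ univ.biUnion P \ srcBall M P m := fun v hv => by
    rw [mem_sdiff] at hv ⊢
    exact ⟨by_contra fun hvS => hv.2 (srcBall_mono hm (mem_srcBall_one_of_notMem hvS)), hv.2⟩
  have := card_inter_add_card_sdiff (univ.biUnion Q) (srcBall M P m)
  have := card_inter_add_card_sdiff (univ.biUnion P) (srcBall M P m)
  have := card_le_card hsdiff
  omega

lemma sub_two_mul_card_le_of_partitionable (hP : ∀ i, (M i).Indep (P i))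
    (hPdisj : ∀ i j, i ≠ j → Disjoint (P i) (P j)) {T : Finset V} (hT : Partitionable M T) :
    (d - 2) * T.card ≤ (d - 1) * (univ.biUnion P).card := by
  set S := univ.biUnion P with hS
  rcases le_or_gt d 2 with hd | hd
  · simp [Nat.sub_eq_zero_of_le hd]
  set g : ℕ → ℕ := fun m => (S ∩ srcBall M P (m + 1)).card
  have hg : Monotone g := fun _ _ hab =>
    card_le_card (inter_subset_inter_left (srcBall_mono (Nat.succ_le_succ hab)))
  obtain ⟨ℓ, hℓ, hgap⟩ := exists_lt_mul_tsub_le_of_monotone hg (k := d - 2) (by omega)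
  have hgS : g (d - 2) ≤ S.card := card_le_card inter_subset_left
  have hTle : T.card ≤ S.card + (g (ℓ + 1) - g ℓ) := by
    have := card_add_card_inter_srcBall_le hdist hP hPdisj (m := ℓ + 1) (by omega) (by omega) hT
    rw [← hS] at this
    simp only [g]
    omega
  calc (d - 2) * T.card ≤ (d - 2) * (S.card + (g (ℓ + 1) - g ℓ)) := Nat.mul_le_mul_left _ hTle
    _ = (d - 2) * S.card + (d - 2) * (g (ℓ + 1) - g ℓ) := mul_add _ _ _
    _ ≤ (d - 2) * S.card + S.card := Nat.add_le_add_left (hgap.trans hgS) _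
    _ = (d - 1) * S.card := by rw [show d - 1 = d - 2 + 1 by omega, add_mul, one_mul]

end ExchangeGraph

/-- There is a universal constant `c > 0` such that: if every `(s,T)`-path of the
compressed exchange graph has length at least `d`, then `|S| ≥ (1 − c/d) · p`, where
`p` is the maximum size of a partitionable set. -/
theorem distance_implies_large_partitionable_set :
    ∃ c : ℝ, 0 < c ∧
      ∀ (V ι : Type) [DecidableEq V] [Fintype V] [DecidableEq ι] [Fintype ι]
        (M : ι → FinMatroid V) (P : ι → Finset V) (S : Finset V),
        (∀ i, (M i).Indep (P i)) → (∀ i j, i ≠ j → Disjoint (P i) (P j)) →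
        Finset.univ.biUnion P = S →
        ∀ d : ℕ, 0 < d →
        (∀ i : ι, (d : ℕ∞) ≤ ddist (compAdj M P) CVert.src (CVert.snk i)) →
        (1 - c / (d : ℝ)) *
            ((sSup {n : ℕ | ∃ T : Finset V, Partitionable M T ∧ T.card = n} : ℕ) : ℝ)
          ≤ (S.card : ℝ) := by
  refine ⟨2, two_pos, fun V ι _ _ _ _ M P S hP hPdisj hS d hd hdist => ?_⟩
  subst hS
  obtain ⟨T, hT, hTp⟩ := Nat.sSup_mem (s := {n | ∃ T : Finset V, Partitionable M T ∧ T.card = n})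
    ⟨_, _, ⟨P, hP, hPdisj, rfl⟩, rfl⟩ ⟨Fintype.card V, fun _ ⟨T, _, hn⟩ => hn ▸ T.card_le_univ⟩
  rw [← hTp]
  have key := sub_two_mul_card_le_of_partitionable hdist hP hPdisj hT
  have hdR : (0 : ℝ) < d := by exact_mod_cast hd
  rcases le_or_gt d 2 with hd2 | hd2
  · have : 1 - 2 / (d : ℝ) ≤ 0 := by
      rw [sub_nonpos, one_le_div hdR]
      exact_mod_cast hd2
    exact (mul_nonpos_of_nonpos_of_nonneg this (Nat.cast_nonneg _)).trans (Nat.cast_nonneg _)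
  · have keyR := (Nat.cast_le (α := ℝ)).mpr key
    push_cast [Nat.cast_sub hd2.le, Nat.cast_sub hd] at keyR
    rw [one_sub_div hdR.ne', div_mul_eq_mul_div, div_le_iff₀ hdR]
    nlinarith [Nat.cast_nonneg (α := ℝ) (univ.biUnion P).card]
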